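/- Let V, W ∈ Gr₂(n,k), let CS(V), CS(W), CS(V^⊥), CS(W^⊥) be fixed sets of coset representatives, and let z ∈ CS(V^⊥) and x' ∈ CS(W). Then ‖ (∑_{x ∈ CS(V)} |V_{x,z}⟩⟨V_{x,z}|) · (∑_{z' ∈ CS(W^⊥)} |W_{x',z'}⟩⟨W_{x',z'}|) ‖ ≤ √(2^{dim(V ∩ W) − k}), where ‖·‖ is the operator norm on (ℂ²)^{⊗n}. -/

import Mathlib

open scoped Classical

/-- The coset state `|W_{x,z}⟩ = 2^{-k/2} ∑_{u ∈ W} (-1)^{z·u} |x+u⟩` in `(ℂ²)^{⊗n}`,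
identified with `EuclideanSpace ℂ (Fin n → ZMod 2)` via the computational basis. -/
noncomputable def cosetState {n : ℕ} (W : Submodule (ZMod 2) (Fin n → ZMod 2))
    (x z : Fin n → ZMod 2) : EuclideanSpace ℂ (Fin n → ZMod 2) :=
  (((Real.sqrt 2 : ℝ) : ℂ) ^ (Module.finrank (ZMod 2) W))⁻¹ •
    ∑ u : W, ((-1 : ℂ) ^ (dotProduct z (u : Fin n → ZMod 2)).val) •
      EuclideanSpace.single (x + (u : Fin n → ZMod 2)) (1 : ℂ)

/-- The dual space `W^⊥ = {y ∈ 𝔽₂ⁿ : x·y = 0 for all x ∈ W}` with respect to the standard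
bilinear form `x·y = ∑ᵢ xᵢyᵢ`. -/
def dualSpace {n : ℕ} (W : Submodule (ZMod 2) (Fin n → ZMod 2)) :
    Submodule (ZMod 2) (Fin n → ZMod 2) where
  carrier := {y | ∀ x ∈ W, dotProduct x y = 0}
  add_mem' := by
    intro a b ha hb x hx
    simp [dotProduct_add, ha x hx, hb x hx]
  zero_mem' := by
    intro x hx
    simp
  smul_mem' := by
    intro c a ha x hx
    simp [dotProduct_smul, ha x hx]

/-- `T` is a set of coset representatives of the subspace `W` in `𝔽₂ⁿ`: it contains exactly
one vector from each coset of `W`. -/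
def IsCosetReps {n : ℕ} (W : Submodule (ZMod 2) (Fin n → ZMod 2))
    (T : Set (Fin n → ZMod 2)) : Prop :=
  ∀ v : Fin n → ZMod 2, ∃! x, x ∈ T ∧ v - x ∈ W

/-- The rank-one operator `|ψ⟩⟨φ|`. -/
noncomputable def outer {ι : Type*} [Fintype ι] [DecidableEq ι]
    (ψ φ : EuclideanSpace ℂ ι) : EuclideanSpace ℂ ι →L[ℂ] EuclideanSpace ℂ ι :=
  (innerSL ℂ φ).smulRight ψ

/-! `P = ∑ₓ |V_{x,z}⟩⟨V_{x,z}|` and `Q = ∑_{z'} |W_{x',z'}⟩⟨W_{x',z'}|` are orthogonal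
projections, being sums of rank-one projections onto orthonormal families of coset states, so
`‖PQ‖² = ‖QPQ‖` by the C⋆-identity. Evaluating on the computational basis gives
`P = 2⁻ᵏ ∑_{v ∈ V} (-1)^{z·v} X^v` with `X^v` the translation by `v`. The range of `Q` is
spanned by basis vectors in the coset `x' + W`, which `X^v` moves to `x' + v + W`; hence
`Q X^v Q = 0` unless `v ∈ W`, and `‖Q X^v Q‖ ≤ 1` always. Summing, `‖QPQ‖ ≤ 2⁻ᵏ |V ∩ W|`. -/

open InnerProductSpace

theorem IsStarProjection.norm_mul_sq {A : Type*} [NonUnitalNormedRing A] [StarRing A]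
    [CStarRing A] {p q : A} (hp : IsStarProjection p) (hq : IsSelfAdjoint q) :
    ‖p * q‖ ^ 2 = ‖q * p * q‖ := by
  rw [sq, ← CStarRing.norm_star_mul_self, star_mul, hq.star_eq, hp.isSelfAdjoint.star_eq,
    mul_assoc, ← mul_assoc p, hp.isIdempotentElem.eq, mul_assoc]

theorem norm_mul_sum_smul_mul_le {𝕜 A ι : Type*} [NormedField 𝕜] [NormedRing A]
    [NormedAlgebra 𝕜 A] (s : Finset ι) (q : A) (c : ι → 𝕜) (a : ι → A) :
    ‖q * (∑ i ∈ s, c i • a i) * q‖ ≤ ∑ i ∈ s, ‖c i‖ * ‖q * a i * q‖ := by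
  simp only [Finset.mul_sum, Finset.sum_mul, mul_smul_comm, smul_mul_assoc]
  exact (norm_sum_le _ _).trans_eq (Finset.sum_congr rfl fun i _ => norm_smul _ _)

section RankOne

variable {𝕜 E ι : Type*} [RCLike 𝕜] [NormedAddCommGroup E] [InnerProductSpace 𝕜 E]
  [Fintype ι]

theorem isStarProjection_sum_rankOne [CompleteSpace E] {f : ι → E} (hf : Orthonormal 𝕜 f) :
    IsStarProjection (∑ i, rankOne 𝕜 (f i) (f i)) where
  isSelfAdjoint := by
    simp only [IsSelfAdjoint, star_sum, ContinuousLinearMap.star_eq_adjoint, adjoint_rankOne]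
  isIdempotentElem := by
    classical
    simp only [IsIdempotentElem, Finset.sum_mul_sum, ContinuousLinearMap.mul_def,
      rankOne_comp_rankOne, orthonormal_iff_ite.mp hf, ite_smul, one_smul, zero_smul,
      Finset.sum_ite_eq, Finset.mem_univ, if_true]

theorem sum_rankOne_mul_mul_sum_rankOne_eq_zero {f : ι → E} {A : E →L[𝕜] E}
    (h : ∀ i j, inner 𝕜 (f i) (A (f j)) = 0) :
    (∑ i, rankOne 𝕜 (f i) (f i)) * A * (∑ i, rankOne 𝕜 (f i) (f i)) = 0 := by
  ext x
  simp [rankOne_apply, map_sum, map_smul, h]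

end RankOne

theorem outer_eq_rankOne {ι : Type*} [Fintype ι] [DecidableEq ι] (ψ φ : EuclideanSpace ℂ ι) :
    outer ψ φ = rankOne ℂ ψ φ :=
  rfl

section Translation

variable (𝕜 : Type*) {G : Type*} [RCLike 𝕜] [AddGroup G] [Fintype G]

noncomputable def translation (v : G) : EuclideanSpace 𝕜 G →L[𝕜] EuclideanSpace 𝕜 G :=
  (LinearIsometryEquiv.piLpCongrLeft 2 𝕜 𝕜 (Equiv.addRight v)).toLinearIsometry
    |>.toContinuousLinearMap

variable {𝕜}

theorem translation_single [DecidableEq G] (v j : G) (a : 𝕜) :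
    translation 𝕜 v (EuclideanSpace.single j a) = EuclideanSpace.single (j + v) a :=
  EuclideanSpace.piLpCongrLeft_single (Equiv.addRight v) j a

theorem norm_translation_le (v : G) : ‖translation 𝕜 v‖ ≤ 1 :=
  LinearIsometry.norm_toContinuousLinearMap_le _

end Translation

theorem neg_one_pow_val_add {R : Type*} [Ring R] (a b : ZMod 2) :
    (-1 : R) ^ (a + b).val = (-1) ^ a.val * (-1) ^ b.val := by
  rw [ZMod.val_add, ← neg_one_pow_eq_pow_mod_two, pow_add]

theorem neg_one_pow_mul_self {R : Type*} [Ring R] (m : ℕ) : (-1 : R) ^ m * (-1) ^ m = 1 := by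
  rw [← pow_add, ← two_mul, pow_mul, neg_one_sq, one_pow]

section CosetState

open Module

theorem IsCosetReps.eq_of_sub_mem {n : ℕ} {W : Submodule (ZMod 2) (Fin n → ZMod 2)}
    {T : Set (Fin n → ZMod 2)} (hT : IsCosetReps W T) {x y : Fin n → ZMod 2} (hx : x ∈ T)
    (hy : y ∈ T) (h : x - y ∈ W) : x = y :=
  (hT x).unique ⟨hx, by simp⟩ ⟨hy, h⟩

variable {n : ℕ} (W : Submodule (ZMod 2) (Fin n → ZMod 2))

theorem sum_neg_one_pow_dotProduct (c : Fin n → ZMod 2) :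
    ∑ u : W, (-1 : ℂ) ^ (c ⬝ᵥ (u : Fin n → ZMod 2)).val =
      if c ∈ dualSpace W then 2 ^ finrank (ZMod 2) W else 0 := by
  split_ifs with hc
  · have hu : ∀ u : W, c ⬝ᵥ (u : Fin n → ZMod 2) = 0 := fun u => by
      rw [dotProduct_comm]; exact hc u u.2
    simp [hu, Module.card_eq_pow_finrank (K := ZMod 2) (V := W), ZMod.card]
  · obtain ⟨u₀, hu₀, hcu₀⟩ : ∃ u₀ ∈ W, u₀ ⬝ᵥ c ≠ 0 := by
      simpa [dualSpace] using hc
    have hcu₀' : c ⬝ᵥ u₀ = 1 := by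
      rw [dotProduct_comm]
      exact (by decide : ∀ a : ZMod 2, a ≠ 0 → a = 1) _ hcu₀
    have hflip : ∑ u : W, (-1 : ℂ) ^ (c ⬝ᵥ (u : Fin n → ZMod 2)).val =
        ∑ u : W, -(-1 : ℂ) ^ (c ⬝ᵥ (u : Fin n → ZMod 2)).val :=
      Fintype.sum_equiv (Equiv.addRight ⟨u₀, hu₀⟩) _ _ fun u => by
        simp [dotProduct_add, neg_one_pow_val_add, hcu₀', ZMod.val_one]
    rw [Finset.sum_neg_distrib] at hflip
    exact self_eq_neg.mp hflip

theorem inv_sqrt_two_pow_mul_self (m : ℕ) :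
    (((√2 : ℝ) : ℂ) ^ m)⁻¹ * (((√2 : ℝ) : ℂ) ^ m)⁻¹ = ((2 : ℂ) ^ m)⁻¹ := by
  rw [← mul_inv, ← mul_pow, ← Complex.ofReal_mul, Real.mul_self_sqrt zero_le_two]
  push_cast; rfl

theorem inner_cosetState_single (x z y : Fin n → ZMod 2) :
    inner ℂ (cosetState W x z) (EuclideanSpace.single y 1) =
      if y - x ∈ W then
        (((√2 : ℝ) : ℂ) ^ finrank (ZMod 2) W)⁻¹ * (-1) ^ (z ⬝ᵥ (y - x)).val
      else 0 := by
  simp only [cosetState, inner_smul_left, sum_inner, EuclideanSpace.inner_single_left,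
    PiLp.single_apply, map_inv₀, map_pow, Complex.conj_ofReal, map_neg, map_one, mul_one,
    mul_ite, mul_zero]
  split_ifs with h
  · rw [Finset.sum_eq_single ⟨y - x, h⟩]
    · simp
    · rintro u - hu
      rw [if_neg]
      rintro rfl
      exact hu (Subtype.ext (add_sub_cancel_left _ _).symm)
    · simp
  · refine mul_eq_zero_of_right _ (Finset.sum_eq_zero fun u _ => if_neg ?_)
    rintro rfl
    exact h (by simp)

theorem cosetState_add_of_mem (x z : Fin n → ZMod 2) {u : Fin n → ZMod 2} (hu : u ∈ W) :
    cosetState W (x + u) z = (-1 : ℂ) ^ (z ⬝ᵥ u).val • cosetState W x z := by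
  rw [cosetState, cosetState, smul_comm ((-1 : ℂ) ^ (z ⬝ᵥ u).val)]
  congr 1
  rw [Finset.smul_sum]
  refine Fintype.sum_equiv (Equiv.addRight (⟨u, hu⟩ : W)) _ _ fun w => ?_
  simp only [Equiv.coe_addRight, Submodule.coe_add, dotProduct_add, neg_one_pow_val_add,
    smul_smul]
  rw [mul_left_comm, neg_one_pow_mul_self, mul_one, ← add_assoc, add_right_comm]

theorem translation_cosetState (v x z : Fin n → ZMod 2) :
    translation ℂ v (cosetState W x z) = cosetState W (x + v) z := by
  simp only [cosetState, map_smul, map_sum, translation_single, add_right_comm x]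

theorem inner_cosetState_eq_zero_of_sub_notMem {x x' : Fin n → ZMod 2} (h : x' - x ∉ W)
    (z z' : Fin n → ZMod 2) : inner ℂ (cosetState W x z) (cosetState W x' z') = 0 := by
  rw [cosetState.eq_1 W x' z', inner_smul_right, inner_sum]
  refine mul_eq_zero_of_right _ (Finset.sum_eq_zero fun u _ => ?_)
  rw [inner_smul_right, inner_cosetState_single, if_neg, mul_zero]
  rwa [add_sub_right_comm, Submodule.add_mem_iff_left _ u.2]

theorem inner_cosetState_cosetState (x z z' : Fin n → ZMod 2) :
    inner ℂ (cosetState W x z) (cosetState W x z') = if z + z' ∈ dualSpace W then 1 else 0 := by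
  rw [cosetState.eq_1 W x z', inner_smul_right, inner_sum]
  simp only [inner_smul_right, inner_cosetState_single, add_sub_cancel_left, SetLike.coe_mem,
    if_true]
  have hterm : ∀ u : W, (-1 : ℂ) ^ (z' ⬝ᵥ (u : Fin n → ZMod 2)).val *
      ((((√2 : ℝ) : ℂ) ^ finrank (ZMod 2) W)⁻¹ * (-1) ^ (z ⬝ᵥ (u : Fin n → ZMod 2)).val) =
      (((√2 : ℝ) : ℂ) ^ finrank (ZMod 2) W)⁻¹ * (-1) ^ ((z + z') ⬝ᵥ (u : Fin n → ZMod 2)).val :=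
    fun u => by rw [add_dotProduct, neg_one_pow_val_add]; ring
  simp only [hterm, ← Finset.mul_sum, ← mul_assoc, inv_sqrt_two_pow_mul_self,
    sum_neg_one_pow_dotProduct]
  split_ifs <;> simp

theorem orthonormal_cosetState_of_isCosetReps {T : Set (Fin n → ZMod 2)} (hT : IsCosetReps W T)
    (z : Fin n → ZMod 2) : Orthonormal ℂ fun x : T => cosetState W x z := by
  rw [orthonormal_iff_ite]
  intro x x'
  split_ifs with h
  · rw [h, inner_cosetState_cosetState, ZModModule.add_self, if_pos (zero_mem _)]
  · refine inner_cosetState_eq_zero_of_sub_notMem W (fun hx => h ?_) z z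
    exact Subtype.ext (hT.eq_of_sub_mem x'.2 x.2 hx).symm

theorem orthonormal_cosetState_of_isCosetReps_dualSpace {T : Set (Fin n → ZMod 2)}
    (hT : IsCosetReps (dualSpace W) T) (x : Fin n → ZMod 2) :
    Orthonormal ℂ fun z : T => cosetState W x z := by
  rw [orthonormal_iff_ite]
  intro z z'
  rw [inner_cosetState_cosetState]
  refine if_congr ⟨fun h => Subtype.ext (hT.eq_of_sub_mem z.2 z'.2 ?_), ?_⟩ rfl rfl
  · rwa [ZModModule.sub_eq_add]
  · rintro rfl
    rw [ZModModule.add_self]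
    exact zero_mem _

theorem sum_rankOne_cosetState_eq {T : Set (Fin n → ZMod 2)} (hT : IsCosetReps W T)
    (z : Fin n → ZMod 2) :
    ∑ x : T, rankOne ℂ (cosetState W x z) (cosetState W x z) =
      ((2 : ℂ) ^ finrank (ZMod 2) W)⁻¹ •
        ∑ v : W, (-1 : ℂ) ^ (z ⬝ᵥ (v : Fin n → ZMod 2)).val •
          translation ℂ (v : Fin n → ZMod 2) := by
  refine ContinuousLinearMap.coe_injective <|
    (EuclideanSpace.basisFun _ ℂ).toBasis.ext fun y => ?_
  simp only [OrthonormalBasis.coe_toBasis, EuclideanSpace.basisFun_apply,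
    ContinuousLinearMap.coe_coe]
  obtain ⟨x₀, hx₀, hyx₀⟩ := (hT y).exists
  have hx₀y : cosetState W x₀ z = (-1 : ℂ) ^ (z ⬝ᵥ (y - x₀)).val • cosetState W y z := by
    rw [← add_sub_cancel x₀ y, cosetState_add_of_mem W x₀ z hyx₀, add_sub_cancel, smul_smul,
      neg_one_pow_mul_self, one_smul]
  rw [sum_apply, Finset.sum_eq_single ⟨x₀, hx₀⟩]
  · rw [rankOne_apply, inner_cosetState_single, if_pos hyx₀, hx₀y, smul_smul, mul_assoc,
      neg_one_pow_mul_self, mul_one, cosetState, smul_smul, inv_sqrt_two_pow_mul_self]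
    simp [translation_single]
  · rintro ⟨x, hx⟩ - hne
    rw [rankOne_apply, inner_cosetState_single, if_neg, zero_smul]
    intro hyx
    refine hne (Subtype.ext (hT.eq_of_sub_mem hx hx₀ ?_))
    simpa using W.sub_mem hyx₀ hyx
  · simp

theorem norm_sum_rankOne_cosetState_mul_translation_mul_le {T : Set (Fin n → ZMod 2)}
    (hT : IsCosetReps (dualSpace W) T) (x v : Fin n → ZMod 2) :
    ‖(∑ z : T, rankOne ℂ (cosetState W x z) (cosetState W x z)) * translation ℂ v *
        ∑ z : T, rankOne ℂ (cosetState W x z) (cosetState W x z)‖ ≤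
      if v ∈ W then 1 else 0 := by
  split_ifs with hv
  · have hQ := IsStarProjection.norm_le _
      (isStarProjection_sum_rankOne (orthonormal_cosetState_of_isCosetReps_dualSpace W hT x))
    calc _ ≤ _ := norm_mul₃_le
      _ ≤ 1 * 1 * 1 := by gcongr; exact norm_translation_le v
      _ = 1 := by norm_num
  · rw [sum_rankOne_mul_mul_sum_rankOne_eq_zero, norm_zero]
    intro z z'
    rw [translation_cosetState]
    exact inner_cosetState_eq_zero_of_sub_notMem W (by simpa using hv) _ _

theorem sum_ite_mem_eq_two_pow_finrank_inf (V : Submodule (ZMod 2) (Fin n → ZMod 2)) :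
    ∑ v : V, (if (v : Fin n → ZMod 2) ∈ W then 1 else 0 : ℝ) = 2 ^ finrank (ZMod 2) ↥(V ⊓ W) := by
  have hcard := Module.card_eq_pow_finrank (K := ZMod 2) (V := ↥(V ⊓ W))
  rw [ZMod.card] at hcard
  rw [Finset.sum_boole, ← Fintype.card_subtype, Fintype.card_congr
    ((Equiv.subtypeSubtypeEquivSubtypeInter (· ∈ V) (· ∈ W)).trans
      (Equiv.subtypeEquivRight fun _ => Submodule.mem_inf.symm))]
  exact_mod_cast hcard

end CosetState

theorem norm_sum_outer_mul_sum_outer_le_general {n k : ℕ}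
    (V W : Submodule (ZMod 2) (Fin n → ZMod 2))
    (hV : Module.finrank (ZMod 2) V = k)
    (TV TWp : Set (Fin n → ZMod 2))
    (hTV : IsCosetReps V TV)
    (hTWp : IsCosetReps (dualSpace W) TWp)
    (z x' : Fin n → ZMod 2) :
    ‖(∑ x : TV, outer (cosetState V (x : Fin n → ZMod 2) z)
          (cosetState V (x : Fin n → ZMod 2) z)) *
        (∑ z' : TWp, outer (cosetState W x' (z' : Fin n → ZMod 2))
          (cosetState W x' (z' : Fin n → ZMod 2)))‖ ≤
      Real.sqrt ((2 : ℝ) ^ ((Module.finrank (ZMod 2) ↥(V ⊓ W) : ℤ) - (k : ℤ))) := by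
  simp only [outer_eq_rankOne]
  set P := ∑ x : TV, rankOne ℂ (cosetState V x z) (cosetState V x z) with hP
  set Q := ∑ z' : TWp, rankOne ℂ (cosetState W x' z') (cosetState W x' z')
  have hPproj := isStarProjection_sum_rankOne (orthonormal_cosetState_of_isCosetReps V hTV z)
  have hQproj := isStarProjection_sum_rankOne
    (orthonormal_cosetState_of_isCosetReps_dualSpace W hTWp x')
  have hQPQ : ‖Q * P * Q‖ ≤ ((2 : ℝ) ^ k)⁻¹ * 2 ^ Module.finrank (ZMod 2) ↥(V ⊓ W) :=
    calc ‖Q * P * Q‖ = ‖Q * (∑ v : V, (((2 : ℂ) ^ k)⁻¹ * (-1) ^ (z ⬝ᵥ (v : Fin n → ZMod 2)).val) •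
            translation ℂ (v : Fin n → ZMod 2)) * Q‖ := by
          rw [hP, sum_rankOne_cosetState_eq V hTV, hV, Finset.smul_sum]
          simp only [smul_smul]
      _ ≤ ∑ v : V, ‖((2 : ℂ) ^ k)⁻¹ * (-1) ^ (z ⬝ᵥ (v : Fin n → ZMod 2)).val‖ *
            ‖Q * translation ℂ (v : Fin n → ZMod 2) * Q‖ := norm_mul_sum_smul_mul_le _ _ _ _
      _ ≤ ∑ v : V, ((2 : ℝ) ^ k)⁻¹ * if (v : Fin n → ZMod 2) ∈ W then 1 else 0 := by
          gcongr with v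
          · simp
          · exact norm_sum_rankOne_cosetState_mul_translation_mul_le W hTWp x' v
      _ = ((2 : ℝ) ^ k)⁻¹ * 2 ^ Module.finrank (ZMod 2) ↥(V ⊓ W) := by
          rw [← Finset.mul_sum, sum_ite_mem_eq_two_pow_finrank_inf]
  rw [Real.le_sqrt (norm_nonneg _) (by positivity), hPproj.norm_mul_sq hQproj.isSelfAdjoint,
    zpow_sub₀ two_ne_zero, zpow_natCast, zpow_natCast, div_eq_inv_mul]
  exact hQPQ

/-- For `V, W ∈ Gr₂(n,k)`, coset representative sets
`CS(V), CS(W), CS(V^⊥), CS(W^⊥)`, and `z ∈ CS(V^⊥)`, `x' ∈ CS(W)`, the operator norm of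
`(∑_{x ∈ CS(V)} |V_{x,z}⟩⟨V_{x,z}|)·(∑_{z' ∈ CS(W^⊥)} |W_{x',z'}⟩⟨W_{x',z'}|)`
is at most `√(2^{dim(V ∩ W) - k})`. -/
theorem norm_sum_outer_mul_sum_outer_le {n k : ℕ}
    (V W : Submodule (ZMod 2) (Fin n → ZMod 2))
    (hV : Module.finrank (ZMod 2) V = k) (hW : Module.finrank (ZMod 2) W = k)
    (TV TW TVp TWp : Set (Fin n → ZMod 2))
    (hTV : IsCosetReps V TV) (hTW : IsCosetReps W TW)
    (hTVp : IsCosetReps (dualSpace V) TVp) (hTWp : IsCosetReps (dualSpace W) TWp)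
    (z x' : Fin n → ZMod 2) (hz : z ∈ TVp) (hx' : x' ∈ TW) :
    ‖(∑ x : TV, outer (cosetState V (x : Fin n → ZMod 2) z)
          (cosetState V (x : Fin n → ZMod 2) z)) *
        (∑ z' : TWp, outer (cosetState W x' (z' : Fin n → ZMod 2))
          (cosetState W x' (z' : Fin n → ZMod 2)))‖ ≤
      Real.sqrt ((2 : ℝ) ^ ((Module.finrank (ZMod 2) ↥(V ⊓ W) : ℤ) - (k : ℤ))) :=
  norm_sum_outer_mul_sum_outer_le_general V W hV TV TWp hTV hTWp z x'
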